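/- Under the growth bound |p(y,z)| ≤ K(1+|y|)|z|, defining q(x,z) := p(y(x,z), z) where y(x,z) = x − q(x,z), there is a constant C > 0 such that |q(x,z)| ≤ C(1+|x|)|z| for all x and all |z| < 1/(4dK). -/
import Mathlib


/-- With q(x,z) := p(y(x,z),z) where y(x,z) = x − q(x,z), there is C > 0
such that |q(x,z)| ≤ C(1+|x|)|z| for all x and |z| < 1/(4dK). -/
theorem stmt3 (d : ℕ) (hd : 0 < d) (K : ℝ) (hK : 0 < K)
    (p Y : EuclideanSpace ℝ (Fin d) → EuclideanSpace ℝ (Fin d) → EuclideanSpace ℝ (Fin d))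
    (hp : ∀ y z, ‖p y z‖ ≤ K * (1 + ‖y‖) * ‖z‖)
    (hY : ∀ x z, ‖z‖ < 1 / (4 * d * K) → Y x z = x - p (Y x z) z) :
    ∃ C > 0, ∀ x z, ‖z‖ < 1 / (4 * d * K) →
      ‖p (Y x z) z‖ ≤ C * (1 + ‖x‖) * ‖z‖ := by
  refine ⟨2 * K, by positivity, fun x z hz => ?_⟩
  have hd1 : (1 : ℝ) ≤ d := by exact_mod_cast hd
  have h1 : ‖p (Y x z) z‖ ≤ K * (1 + ‖Y x z‖) * ‖z‖ := hp _ _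
  have h2 : ‖Y x z‖ ≤ ‖x‖ + ‖p (Y x z) z‖ := by
    nth_rewrite 1 [hY x z hz]; exact norm_sub_le _ _
  have hpos : (0 : ℝ) < 4 * d * K := by positivity
  have h4 : K * ‖z‖ < 1 / 4 := by
    rw [lt_div_iff₀ hpos] at hz
    nlinarith [norm_nonneg z]
  have h5 : K * (1 + ‖Y x z‖) * ‖z‖ ≤ K * (1 + (‖x‖ + ‖p (Y x z) z‖)) * ‖z‖ := by
    gcongr
  nlinarith [norm_nonneg z, norm_nonneg x, norm_nonneg (p (Y x z) z), h4,
    mul_nonneg (norm_nonneg x) (norm_nonneg z)]
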